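/- arXiv:2303.11562 — 6 statements merged into one kernel-verified Lean document; each statement's English description precedes it below -/
import Mathlib

section
/- Let p = (p_1,...,p_k) be a probability vector with all p_i > 0, and let 0 < q < 1. Then the probability vector f = (f_1,...,f_k) minimizing the GCE risk ∑_y p_y (1 - f_y^q)/q over the probability simplex is given by f_y = p_y^{1/(1-q)} / ∑_i p_i^{1/(1-q)}. -/
/-!
Since `∑ p_y = 1`, the risk of `g` equals `(1 - ∑ p_y g_y ^ q) / q`, so it suffices to maximize
`∑ p_y g_y ^ q` over the simplex. Hölder's inequality with the conjugate exponents `1 / (1 - q)`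
and `1 / q` bounds it by `(∑ p_y ^ (1 / (1 - q))) ^ (1 - q)`, using `∑ (g_y ^ q) ^ (1 / q) = 1`,
and the normalized power `f` attains this bound.
-/

open Finset

section

variable {ι : Type*} (s : Finset ι) {p : ι → ℝ} {q : ℝ}

theorem sum_mul_one_sub_div_eq (h : ι → ℝ) (hp : ∑ i ∈ s, p i = 1) :
    ∑ i ∈ s, p i * ((1 - h i) / q) = (1 - ∑ i ∈ s, p i * h i) / q := by
  simp_rw [mul_div_assoc', ← sum_div, mul_sub, mul_one, sum_sub_distrib, hp]

theorem sum_mul_rpow_le_of_sum_eq_one {g : ι → ℝ} (hp : ∀ i ∈ s, 0 ≤ p i)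
    (hg : ∀ i ∈ s, 0 ≤ g i) (hgs : ∑ i ∈ s, g i = 1) (hq0 : 0 < q) (hq1 : q < 1) :
    ∑ i ∈ s, p i * g i ^ q ≤ (∑ i ∈ s, p i ^ (1 / (1 - q))) ^ (1 - q) := by
  have hconj : Real.HolderConjugate (1 / (1 - q)) (1 / q) := by
    rw [Real.holderConjugate_iff]
    exact ⟨by rw [lt_div_iff₀ (by linarith)]; linarith, by simp⟩
  have hg_pow : ∑ i ∈ s, (g i ^ q) ^ (1 / q) = 1 := by
    refine (sum_congr rfl fun i hi => ?_).trans hgs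
    rw [← Real.rpow_mul (hg i hi), mul_one_div_cancel hq0.ne', Real.rpow_one]
  have := Real.inner_le_Lp_mul_Lq_of_nonneg s hconj hp fun i hi => Real.rpow_nonneg (hg i hi) q
  rwa [hg_pow, Real.one_rpow, mul_one, one_div_one_div] at this

theorem sum_mul_rpow_normalized_rpow (hp : ∀ i ∈ s, 0 ≤ p i) (hq : q ≠ 1) :
    ∑ i ∈ s, p i * (p i ^ (1 / (1 - q)) / ∑ j ∈ s, p j ^ (1 / (1 - q))) ^ q =
      (∑ i ∈ s, p i ^ (1 / (1 - q))) ^ (1 - q) := by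
  set S := ∑ j ∈ s, p j ^ (1 / (1 - q))
  have hS : 0 ≤ S := sum_nonneg fun j hj => Real.rpow_nonneg (hp j hj) _
  have h1q : 1 - q ≠ 0 := sub_ne_zero.mpr hq.symm
  have hexp : 1 + 1 / (1 - q) * q = 1 / (1 - q) := by field_simp; ring
  have hterm : ∀ i ∈ s, p i * (p i ^ (1 / (1 - q)) / S) ^ q = p i ^ (1 / (1 - q)) / S ^ q := by
    intro i hi
    rw [Real.div_rpow (Real.rpow_nonneg (hp i hi) _) hS, ← Real.rpow_mul (hp i hi),
      mul_div_assoc']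
    congr 1
    conv_rhs => rw [← hexp, Real.rpow_add' (hp i hi) (by rw [hexp]; exact one_div_ne_zero h1q),
      Real.rpow_one]
  rw [sum_congr rfl hterm, ← sum_div, Real.rpow_sub' hS h1q, Real.rpow_one]

end

/-- Theorem 1: for 0 < q < 1, the GCE risk over the probability simplex is
minimized by the power-normalized posterior. -/
theorem gce_minimizer_lt_one (k : ℕ) (hk : 0 < k) (p : Fin k → ℝ)
    (hp : ∀ i, 0 < p i) (hpsum : ∑ i, p i = 1)
    (q : ℝ) (hq0 : 0 < q) (hq1 : q < 1) :
    let f : Fin k → ℝ := fun y => p y ^ (1 / (1 - q)) / ∑ i, p i ^ (1 / (1 - q))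
    (∀ i, 0 ≤ f i) ∧ (∑ i, f i = 1) ∧
      ∀ g : Fin k → ℝ, (∀ i, 0 ≤ g i) → (∑ i, g i = 1) →
        ∑ y, p y * ((1 - f y ^ q) / q) ≤ ∑ y, p y * ((1 - g y ^ q) / q) := by
  intro f
  have hp' : ∀ i ∈ univ, 0 ≤ p i := fun i _ => (hp i).le
  have hS : 0 < ∑ i, p i ^ (1 / (1 - q)) :=
    sum_pos (fun i _ => Real.rpow_pos_of_pos (hp i) _) ⟨⟨0, hk⟩, mem_univ _⟩
  refine ⟨fun i => div_nonneg (Real.rpow_nonneg (hp i).le _) hS.le,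
    by simp only [f, ← sum_div]; exact div_self hS.ne', fun g hg hgsum => ?_⟩
  rw [sum_mul_one_sub_div_eq _ (fun y => f y ^ q) hpsum,
    sum_mul_one_sub_div_eq _ (fun y => g y ^ q) hpsum]
  have hmax : ∑ y, p y * g y ^ q ≤ ∑ y, p y * f y ^ q := by
    rw [sum_mul_rpow_normalized_rpow _ hp' hq1.ne]
    exact sum_mul_rpow_le_of_sum_eq_one _ hp' (fun i _ => hg i) hgsum hq0 hq1
  gcongr
end

section
/- Let p = (p_1,...,p_k) be a probability vector and q > 1. For any probability vector f in the simplex, ∑_y p_y (1 - f_y^q)/q ≥ (1 - max_y p_y)/q, and if the maximizer y* = argmax_y p_y is unique, equality holds if and only if f is the one-hot vector e^{(y*)}. -/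
open Finset

/-- Theorem 2: for q > 1, the GCE risk is bounded below by (1 - max_y p_y)/q on
the simplex, and when the maximizer of p is unique, equality holds iff f is the
corresponding one-hot vector. -/
theorem gce_risk_lower_bound_q_gt_one (k : ℕ) (p : Fin k → ℝ)
    (hp : ∀ i, 0 ≤ p i) (hpsum : ∑ i, p i = 1)
    (q : ℝ) (hq : 1 < q)
    (ystar : Fin k) (hstar : ∀ y, y ≠ ystar → p y < p ystar) :
    ∀ f : Fin k → ℝ, (∀ i, 0 ≤ f i) → (∑ i, f i = 1) →
      ((1 - p ystar) / q ≤ ∑ y, p y * ((1 - f y ^ q) / q)) ∧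
      (∑ y, p y * ((1 - f y ^ q) / q) = (1 - p ystar) / q ↔
        f = fun y => if y = ystar then (1 : ℝ) else 0) := by
  intro f hf hfsum
  have hq0 : (0:ℝ) < q := lt_trans one_pos hq
  have hf1 : ∀ i, f i ≤ 1 := by
    intro i
    have := Finset.single_le_sum (f := f) (fun j _ => hf j) (mem_univ i)
    linarith
  have hple : ∀ y, p y ≤ p ystar := by
    intro y
    by_cases h : y = ystar
    · subst h; exact le_refl _
    · exact (hstar y h).le
  have hps : 0 ≤ p ystar := hp ystar
  have hpow_nonneg : ∀ y, 0 ≤ f y ^ q := fun y => Real.rpow_nonneg (hf y) q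
  have hpow_le : ∀ y, f y ^ q ≤ f y := by
    intro y
    rcases eq_or_lt_of_le (hf y) with h | h
    · rw [← h, Real.zero_rpow (ne_of_gt hq0)]
    · calc f y ^ q ≤ f y ^ (1:ℝ) :=
            Real.rpow_le_rpow_of_exponent_ge h (hf1 y) hq.le
        _ = f y := Real.rpow_one _
  have hterm : ∀ y, p y * f y ^ q ≤ p ystar * f y := by
    intro y
    calc p y * f y ^ q ≤ p ystar * f y ^ q :=
          mul_le_mul_of_nonneg_right (hple y) (hpow_nonneg y)
      _ ≤ p ystar * f y := mul_le_mul_of_nonneg_left (hpow_le y) hps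
  have hsum_le : ∑ y, p y * f y ^ q ≤ p ystar := by
    calc ∑ y, p y * f y ^ q ≤ ∑ y, p ystar * f y :=
          Finset.sum_le_sum fun y _ => hterm y
      _ = p ystar := by rw [← Finset.mul_sum, hfsum, mul_one]
  have key : ∑ y, p y * ((1 - f y ^ q) / q) = (1 - ∑ y, p y * f y ^ q) / q := by
    have e : ∀ y : Fin k, p y * ((1 - f y ^ q) / q) = (p y - p y * f y ^ q) / q :=
      fun y => by ring
    simp only [e]
    rw [← Finset.sum_div, Finset.sum_sub_distrib, hpsum]
  constructor
  · rw [key]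
    exact (div_le_div_iff_of_pos_right hq0).mpr (by linarith)
  · constructor
    · intro h
      rw [key] at h
      have hS : ∑ y, p y * f y ^ q = p ystar := by
        have h2 := congrArg (· * q) h
        simp only [div_mul_cancel₀ _ (ne_of_gt hq0)] at h2
        linarith
      have hzero : ∀ y ∈ Finset.univ, p ystar * f y - p y * f y ^ q = 0 := by
        apply (Finset.sum_eq_zero_iff_of_nonneg
          (fun y _ => sub_nonneg.mpr (hterm y))).mp
        rw [Finset.sum_sub_distrib, ← Finset.mul_sum, hfsum, mul_one, hS, sub_self]
      have hfz : ∀ y, y ≠ ystar → f y = 0 := by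
        intro y hy
        by_contra hne
        have hpos : 0 < f y := lt_of_le_of_ne (hf y) (Ne.symm hne)
        have hqpos : 0 < f y ^ q := Real.rpow_pos_of_pos hpos q
        have h1 : p y * f y ^ q < p ystar * f y ^ q :=
          mul_lt_mul_of_pos_right (hstar y hy) hqpos
        have h2 : p ystar * f y ^ q ≤ p ystar * f y :=
          mul_le_mul_of_nonneg_left (hpow_le y) hps
        have := hzero y (mem_univ y)
        linarith
      have hfst : f ystar = 1 := by
        have := Finset.sum_eq_single ystar (fun b _ hb => hfz b hb)
          (fun h => absurd (mem_univ ystar) h)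
        rw [hfsum] at this
        linarith
      funext y
      by_cases h : y = ystar
      · subst h; simp [hfst]
      · simp [h, hfz y h]
    · intro h
      subst h
      rw [key]
      have hterm' : ∀ y : Fin k,
          p y * ((if y = ystar then (1:ℝ) else 0) ^ q) =
            if y = ystar then p ystar else 0 := by
        intro y
        by_cases h : y = ystar
        · subst h; simp [Real.one_rpow]
        · simp [h, Real.zero_rpow (ne_of_gt hq0)]
      have hS' : ∑ y, p y * ((fun y => if y = ystar then (1:ℝ) else 0) y ^ q)
          = p ystar := by
        simp only [hterm']
        simp
      rw [hS']
end

section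
/- Let p be a probability vector with a unique maximizer y*, let q > 1 and λ > 0. Then the one-hot vector e^{(y*)} is the unique minimizer over the k-simplex of the combined objective ∑_y p_y (1 - f_y^q)/q + λ·(−log max_y f_y). -/
/-!
On the simplex every coordinate lies in `[0, 1]`, so `f_y ^ q ≤ f_y` for `q ≥ 1` and the GCE risk is
at least `(1 - ∑ p_y f_y) / q ≥ (1 - p_{y*}) / q`, the value at the one-hot vector `e^{(y*)}`.
The bootstrapping term is nonnegative and vanishes exactly at one-hot vectors, so a minimizer of
the sum is one-hot at some `i` with `p_i = p_{y*}`, which forces `i = y*`.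
-/

open Finset

section

variable {ι : Type*} [Fintype ι]

noncomputable def gceRisk (p : ι → ℝ) (q : ℝ) (f : ι → ℝ) : ℝ :=
  ∑ y, p y * ((1 - f y ^ q) / q)

noncomputable def bootstrapLoss [Nonempty ι] (f : ι → ℝ) : ℝ :=
  -Real.log (univ.sup' univ_nonempty f)

lemma sum_mul_le_of_mem_stdSimplex {p f : ι → ℝ} {i : ι} (hf : f ∈ stdSimplex ℝ ι)
    (hmax : ∀ y, p y ≤ p i) : ∑ y, p y * f y ≤ p i :=
  calc ∑ y, p y * f y ≤ ∑ y, p i * f y :=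
        sum_le_sum fun y _ => mul_le_mul_of_nonneg_right (hmax y) (hf.1 y)
    _ = p i := by rw [← mul_sum, hf.2, mul_one]

lemma eq_single_of_mem_stdSimplex_of_apply_eq_one [DecidableEq ι] {f : ι → ℝ} {i : ι}
    (hf : f ∈ stdSimplex ℝ ι) (hi : f i = 1) : f = Pi.single i 1 := by
  have hrest : ∑ j ∈ univ.erase i, f j = 0 := by
    linarith [add_sum_erase univ f (mem_univ i), hf.2]
  funext j
  rcases eq_or_ne j i with rfl | hj
  · simpa using hi
  · rw [Pi.single_eq_of_ne hj]
    exact (sum_eq_zero_iff_of_nonneg fun x _ => hf.1 x).1 hrest j (mem_erase.2 ⟨hj, mem_univ j⟩)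

lemma sum_mul_one_sub_div {p : ι → ℝ} (hp : ∑ y, p y = 1) (f : ι → ℝ) (q : ℝ) :
    ∑ y, p y * ((1 - f y) / q) = (1 - ∑ y, p y * f y) / q := by
  simp only [mul_div_assoc', mul_sub, mul_one, ← sum_div, sum_sub_distrib, hp]

lemma gceRisk_single [DecidableEq ι] {p : ι → ℝ} (hp : ∑ y, p y = 1) {q : ℝ} (hq : 0 < q)
    (i : ι) : gceRisk p q (Pi.single i 1) = (1 - p i) / q := by
  have hpow : ∀ y, (Pi.single i 1 : ι → ℝ) y ^ q = (Pi.single i 1 : ι → ℝ) y := by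
    intro y
    rcases eq_or_ne y i with rfl | hy
    · simp
    · simp [Pi.single_eq_of_ne hy, Real.zero_rpow hq.ne']
  simp only [gceRisk, hpow, sum_mul_one_sub_div hp]
  simp [Pi.single_apply]

lemma div_le_gceRisk {p f : ι → ℝ} (hp0 : ∀ y, 0 ≤ p y) (hp : ∑ y, p y = 1) {q : ℝ}
    (hq : 1 ≤ q) (hf : f ∈ stdSimplex ℝ ι) : (1 - ∑ y, p y * f y) / q ≤ gceRisk p q f := by
  rw [← sum_mul_one_sub_div hp]
  refine sum_le_sum fun y _ => mul_le_mul_of_nonneg_left ?_ (hp0 y)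
  have ⟨h0, h1⟩ := mem_Icc_of_mem_stdSimplex hf y
  have hq0 : 0 < q := zero_lt_one.trans_le hq
  gcongr
  exact Real.rpow_le_self_of_le_one h0 h1 hq

lemma one_sub_div_le_gceRisk {p f : ι → ℝ} (hp0 : ∀ y, 0 ≤ p y) (hp : ∑ y, p y = 1) {q : ℝ}
    (hq : 1 ≤ q) (hf : f ∈ stdSimplex ℝ ι) {i : ι} (hmax : ∀ y, p y ≤ p i) :
    (1 - p i) / q ≤ gceRisk p q f := by
  have hq0 : 0 < q := zero_lt_one.trans_le hq
  refine le_trans ?_ (div_le_gceRisk hp0 hp hq hf)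
  gcongr
  exact sum_mul_le_of_mem_stdSimplex hf hmax

variable [Nonempty ι]

lemma sup'_mem_Ioc_of_mem_stdSimplex {f : ι → ℝ} (hf : f ∈ stdSimplex ℝ ι) :
    univ.sup' univ_nonempty f ∈ Set.Ioc 0 1 := by
  refine ⟨?_, sup'_le _ _ fun i _ => (mem_Icc_of_mem_stdSimplex hf i).2⟩
  by_contra! h
  have : ∑ i, f i ≤ 0 := sum_nonpos fun i _ => (le_sup' f (mem_univ i)).trans h
  linarith [hf.2]

lemma bootstrapLoss_nonneg {f : ι → ℝ} (hf : f ∈ stdSimplex ℝ ι) : 0 ≤ bootstrapLoss f := by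
  have ⟨h0, h1⟩ := sup'_mem_Ioc_of_mem_stdSimplex hf
  exact neg_nonneg.2 (Real.log_nonpos h0.le h1)

lemma bootstrapLoss_eq_zero_iff [DecidableEq ι] {f : ι → ℝ} (hf : f ∈ stdSimplex ℝ ι) :
    bootstrapLoss f = 0 ↔ ∃ i, f = Pi.single i 1 := by
  have ⟨h0, h1⟩ := sup'_mem_Ioc_of_mem_stdSimplex hf
  have hlog : bootstrapLoss f = 0 ↔ univ.sup' univ_nonempty f = 1 := by
    rw [bootstrapLoss, neg_eq_zero, Real.log_eq_zero]
    constructor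
    · rintro (h | h | h) <;> first | exact h | linarith
    · exact fun h => Or.inr (Or.inl h)
  rw [hlog]
  constructor
  · intro hsup
    obtain ⟨i, -, hi⟩ := exists_mem_eq_sup' univ_nonempty f
    exact ⟨i, eq_single_of_mem_stdSimplex_of_apply_eq_one hf (hi ▸ hsup)⟩
  · rintro ⟨i, rfl⟩
    exact le_antisymm h1 (le_sup'_of_le _ (mem_univ i) (by simp))

end

/-- Corollary 1: for q > 1 and λ > 0, the one-hot vector at the unique
maximizer of p is the unique minimizer over the simplex of the GCE risk plus
the bootstrapping term −log max_y f_y. -/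
theorem gce_bs_unique_minimizer (k : ℕ) (hk : 0 < k) (p : Fin k → ℝ)
    (hp : ∀ i, 0 ≤ p i) (hpsum : ∑ i, p i = 1)
    (q lam : ℝ) (hq : 1 < q) (hlam : 0 < lam)
    (ystar : Fin k) (hstar : ∀ y, y ≠ ystar → p y < p ystar) :
    haveI : Nonempty (Fin k) := ⟨⟨0, hk⟩⟩
    let J : (Fin k → ℝ) → ℝ := fun f =>
      (∑ y, p y * ((1 - f y ^ q) / q)) +
        lam * (- Real.log (Finset.univ.sup' Finset.univ_nonempty f))
    let e : Fin k → ℝ := fun y => if y = ystar then (1 : ℝ) else 0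
    (∀ f : Fin k → ℝ, (∀ i, 0 ≤ f i) → (∑ i, f i = 1) → J e ≤ J f) ∧
    (∀ f : Fin k → ℝ, (∀ i, 0 ≤ f i) → (∑ i, f i = 1) → J f = J e → f = e) := by
  have : Nonempty (Fin k) := ⟨⟨0, hk⟩⟩
  intro J e
  have hq0 : 0 < q := zero_lt_one.trans hq
  have hJ : ∀ f, J f = gceRisk p q f + lam * bootstrapLoss f := fun f => rfl
  have he : e = Pi.single ystar 1 := funext fun y => by simp [e, Pi.single_apply]
  have hJsingle : ∀ i, J (Pi.single i 1) = (1 - p i) / q := fun i => by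
    rw [hJ, (bootstrapLoss_eq_zero_iff (single_mem_stdSimplex ℝ i)).2 ⟨i, rfl⟩, mul_zero,
      add_zero, gceRisk_single hpsum hq0]
  have hmax : ∀ y, p y ≤ p ystar := fun y => by
    rcases eq_or_ne y ystar with rfl | hy
    exacts [le_rfl, (hstar y hy).le]
  have hlow : ∀ f ∈ stdSimplex ℝ (Fin k), J e + lam * bootstrapLoss f ≤ J f := fun f hf => by
    rw [he, hJsingle, hJ]
    gcongr
    exact one_sub_div_le_gceRisk hp hpsum hq.le hf hmax
  refine ⟨fun f hf0 hf1 => ?_, fun f hf0 hf1 hJf => ?_⟩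
  · have hf : f ∈ stdSimplex ℝ (Fin k) := ⟨hf0, hf1⟩
    linarith [hlow f hf, mul_nonneg hlam.le (bootstrapLoss_nonneg hf)]
  · have hf : f ∈ stdSimplex ℝ (Fin k) := ⟨hf0, hf1⟩
    have hbs : bootstrapLoss f = 0 :=
      le_antisymm (by nlinarith [hlow f hf]) (bootstrapLoss_nonneg hf)
    obtain ⟨i, rfl⟩ := (bootstrapLoss_eq_zero_iff hf).1 hbs
    rw [he, hJsingle, hJsingle, div_left_inj' hq0.ne', sub_right_inj] at hJf
    obtain rfl : i = ystar := by_contra fun h => (hstar i h).ne hJf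
    exact he.symm
end

section
/- Let L_{0-1}(f(x), y) = 1[argmax_{y'} f_{y'}(x) ≠ y] and let f*_{0-1} be the Bayes optimal classifier. For any classifier f, the excess 0-1 risk satisfies R_{0-1}(f) − R_{0-1}(f*_{0-1}) ≤ 1 − E_{p(x)} 1[(y* = ỹ*) ∧ (f_{ỹ*}(x) > 1/2)], where y* = argmax_y p(y|x) and ỹ* = argmax_ỹ p̃(ỹ|x) (assumed unique). -/
open Finset MeasureTheory

/-!
On the event `{y* = ỹ*} ∩ {f_{ỹ*}(x) > 1/2}` the classifier predicts `y*`: a probability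
vector has at most one entry above `1/2`, so that entry is its argmax. There the conditional
excess risk `p(y*|x) - p(ŷ|x)` vanishes, and elsewhere it is at most `1`; integrate.
-/

section ProbabilityVector

variable {ι : Type*} [Fintype ι] {w : ι → ℝ}

lemma eq_of_half_lt_of_half_lt (hw : ∀ i, 0 ≤ w i) (hsum : ∑ i, w i = 1) {i j : ι}
    (hi : 1 / 2 < w i) (hj : 1 / 2 < w j) : i = j := by
  classical
  by_contra hij
  have : w i + w j ≤ ∑ l, w l := by
    rw [← sum_pair hij]
    exact sum_le_univ_sum_of_nonneg hw
  linarith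

lemma le_one_of_sum_eq_one (hw : ∀ i, 0 ≤ w i) (hsum : ∑ i, w i = 1) (i : ι) : w i ≤ 1 :=
  hsum ▸ single_le_sum (fun l _ => hw l) (mem_univ i)

end ProbabilityVector

lemma conditional_excess_risk_le {ι : Type*} [Fintype ι] [DecidableEq ι] {p f : ι → ℝ}
    (hp : ∀ i, 0 ≤ p i) (hpsum : ∑ i, p i = 1) (hf : ∀ i, 0 ≤ f i) (hfsum : ∑ i, f i = 1)
    {ystar tystar ypred : ι} (hpred : ∀ i, f i ≤ f ypred) :
    (1 - p ypred) - (1 - p ystar) ≤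
      1 - if ystar = tystar ∧ 1 / 2 < f tystar then (1 : ℝ) else 0 := by
  split_ifs with h
  · obtain ⟨rfl, hhalf⟩ := h
    have : ypred = ystar :=
      eq_of_half_lt_of_half_lt hf hfsum (hhalf.trans_le (hpred ystar)) hhalf
    simp [this]
  · linarith [hp ypred, le_one_of_sum_eq_one hp hpsum ystar]

theorem excess_01_risk_bound_general {X : Type*} [MeasurableSpace X]
    (μ : Measure X) [IsProbabilityMeasure μ] (k : ℕ)
    (p : X → Fin k → ℝ) (f : X → Fin k → ℝ)
    (hp : ∀ x i, 0 ≤ p x i) (hpsum : ∀ x, ∑ i, p x i = 1)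
    (hf : ∀ x i, 0 ≤ f x i) (hfsum : ∀ x, ∑ i, f x i = 1)
    (ystar tystar : X → Fin k)
    (predf : X → Fin k)
    (hpred : ∀ x y, f x y ≤ f x (predf x))
    (hInt₁ : Integrable (fun x => 1 - p x (predf x)) μ)
    (hInt₂ : Integrable (fun x => 1 - p x (ystar x)) μ)
    (hInt₃ : Integrable (fun x =>
      if ystar x = tystar x ∧ 1 / 2 < f x (tystar x) then (1 : ℝ) else 0) μ) :
    (∫ x, (1 - p x (predf x)) ∂μ) - (∫ x, (1 - p x (ystar x)) ∂μ) ≤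
      1 - ∫ x,
        (if ystar x = tystar x ∧ 1 / 2 < f x (tystar x) then (1 : ℝ) else 0) ∂μ := by
  calc (∫ x, (1 - p x (predf x)) ∂μ) - (∫ x, (1 - p x (ystar x)) ∂μ)
      = ∫ x, ((1 - p x (predf x)) - (1 - p x (ystar x))) ∂μ :=
        (integral_sub hInt₁ hInt₂).symm
    _ ≤ ∫ x, (1 - if ystar x = tystar x ∧ 1 / 2 < f x (tystar x) then (1 : ℝ) else 0) ∂μ :=
        integral_mono (hInt₁.sub hInt₂) ((integrable_const 1).sub hInt₃) fun x =>
          conditional_excess_risk_le (hp x) (hpsum x) (hf x) (hfsum x) (hpred x)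
    _ = 1 - ∫ x,
        (if ystar x = tystar x ∧ 1 / 2 < f x (tystar x) then (1 : ℝ) else 0) ∂μ := by
      rw [integral_sub (integrable_const 1) hInt₃, integral_const, probReal_univ, one_smul]

/-- Theorem 3: the excess 0-1 risk of any classifier f is bounded by one minus
the probability of the event that the clean and noisy posteriors share the same
(unique) argmax and f assigns it probability greater than 1/2. -/
theorem excess_01_risk_bound {X : Type*} [MeasurableSpace X]
    (μ : Measure X) [IsProbabilityMeasure μ] (k : ℕ)
    (p ptilde : X → Fin k → ℝ) (f : X → Fin k → ℝ)
    (hp : ∀ x i, 0 ≤ p x i) (hpsum : ∀ x, ∑ i, p x i = 1)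
    (hpt : ∀ x i, 0 ≤ ptilde x i) (hptsum : ∀ x, ∑ i, ptilde x i = 1)
    (hf : ∀ x i, 0 ≤ f x i) (hfsum : ∀ x, ∑ i, f x i = 1)
    (ystar tystar : X → Fin k)
    (hystar : ∀ x y, y ≠ ystar x → p x y < p x (ystar x))
    (htystar : ∀ x y, y ≠ tystar x → ptilde x y < ptilde x (tystar x))
    (predf : X → Fin k)
    (hpred : ∀ x y, f x y ≤ f x (predf x))
    (hInt₁ : Integrable (fun x => 1 - p x (predf x)) μ)
    (hInt₂ : Integrable (fun x => 1 - p x (ystar x)) μ)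
    (hInt₃ : Integrable (fun x =>
      if ystar x = tystar x ∧ 1 / 2 < f x (tystar x) then (1 : ℝ) else 0) μ) :
    (∫ x, (1 - p x (predf x)) ∂μ) - (∫ x, (1 - p x (ystar x)) ∂μ) ≤
      1 - ∫ x,
        (if ystar x = tystar x ∧ 1 / 2 < f x (tystar x) then (1 : ℝ) else 0) ∂μ :=
  excess_01_risk_bound_general μ k p f hp hpsum hf hfsum ystar tystar predf hpred hInt₁ hInt₂ hInt₃
end

section
/- Under symmetric label noise with rate η < (k−1)/k, for any two classifiers f and g mapping into the simplex, the difference of noisy MAE risks equals (1 − ηk/(k−1)) times the difference of clean MAE risks: R̃_MAE(f) − R̃_MAE(g) = (1 − ηk/(k−1)) (R_MAE(f) − R_MAE(g)). Hence any minimizer of the noisy MAE risk minimizes the clean MAE risk (noise tolerance of MAE). -/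
open Finset MeasureTheory

private lemma mae_ptwise (k : ℕ) (hk : 2 ≤ k) (η : ℝ) (p f : Fin k → ℝ)
    (hp : ∑ i, p i = 1) (hf : ∑ i, f i = 1) :
    ∑ y, ((1 - η) * p y + (η / ((k : ℝ) - 1)) * ∑ z ∈ Finset.univ.erase y, p z) * (1 - f y)
      = (1 - η * (k : ℝ) / ((k : ℝ) - 1)) * (∑ y, p y * (1 - f y)) + η := by
  have hk2 : (2 : ℝ) ≤ (k : ℝ) := by exact_mod_cast hk
  have hkne : ((k : ℝ) - 1) ≠ 0 := by linarith
  have he : ∀ y : Fin k, ∑ z ∈ Finset.univ.erase y, p z = 1 - p y := by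
    intro y
    rw [Finset.sum_erase_eq_sub (Finset.mem_univ y), hp]
  have expand : ∀ y : Fin k, ((1 - η) * p y + (η / ((k : ℝ) - 1)) * (1 - p y)) * (1 - f y)
      = (1 - η) * (p y * (1 - f y))
        + (η / ((k : ℝ) - 1)) * ((1 - f y) - p y * (1 - f y)) := by
    intro y; ring
  simp_rw [he, expand]
  have h2 : ∑ y : Fin k, (1 - f y) = (k : ℝ) - 1 := by
    rw [Finset.sum_sub_distrib, hf]
    simp [Finset.card_univ]
  rw [Finset.sum_add_distrib, ← Finset.mul_sum, ← Finset.mul_sum, Finset.sum_sub_distrib, h2]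
  field_simp
  ring

private lemma mae_noisy_eq {X : Type*} [MeasurableSpace X]
    (μ : Measure X) [IsProbabilityMeasure μ] (k : ℕ) (hk : 2 ≤ k)
    (η : ℝ) (p f : X → Fin k → ℝ)
    (hpsum : ∀ x, ∑ i, p x i = 1) (hfsum : ∀ x, ∑ i, f x i = 1)
    (hInt : Integrable (fun x => ∑ y, p x y * (1 - f x y)) μ) :
    (∫ x, ∑ y, ((1 - η) * p x y + (η / ((k : ℝ) - 1)) * ∑ z ∈ Finset.univ.erase y, p x z) * (1 - f x y) ∂μ)
      = (1 - η * (k : ℝ) / ((k : ℝ) - 1)) * (∫ x, ∑ y, p x y * (1 - f x y) ∂μ) + η := by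
  have hcong : (fun x => ∑ y, ((1 - η) * p x y + (η / ((k : ℝ) - 1)) * ∑ z ∈ Finset.univ.erase y, p x z) * (1 - f x y))
      = fun x => (1 - η * (k : ℝ) / ((k : ℝ) - 1)) * (∑ y, p x y * (1 - f x y)) + η := by
    funext x
    exact mae_ptwise k hk η (p x) (f x) (hpsum x) (hfsum x)
  rw [hcong, integral_add (hInt.const_mul _) (integrable_const η),
    integral_const_mul, integral_const]
  simp

/-- Noise tolerance of MAE: under symmetric label noise with rate
η < (k−1)/k, differences of noisy MAE risks are a positive multiple
(1 − ηk/(k−1)) of differences of clean MAE risks; hence a minimizer of the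
noisy MAE risk also minimizes the clean MAE risk. -/
theorem mae_noise_tolerance {X : Type*} [MeasurableSpace X]
    (μ : Measure X) [IsProbabilityMeasure μ] (k : ℕ) (hk : 2 ≤ k)
    (η : ℝ) (hη0 : 0 ≤ η) (hη : η < ((k : ℝ) - 1) / k)
    (p : X → Fin k → ℝ)
    (hp : ∀ x i, 0 ≤ p x i) (hpsum : ∀ x, ∑ i, p x i = 1) :
    let ptilde : X → Fin k → ℝ := fun x yt =>
      (1 - η) * p x yt + (η / ((k : ℝ) - 1)) * ∑ y ∈ Finset.univ.erase yt, p x y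
    let cleanR : (X → Fin k → ℝ) → ℝ := fun f =>
      ∫ x, ∑ y, p x y * (1 - f x y) ∂μ
    let noisyR : (X → Fin k → ℝ) → ℝ := fun f =>
      ∫ x, ∑ y, ptilde x y * (1 - f x y) ∂μ
    ∀ f g : X → Fin k → ℝ,
      (∀ x i, 0 ≤ f x i) → (∀ x, ∑ i, f x i = 1) →
      (∀ x i, 0 ≤ g x i) → (∀ x, ∑ i, g x i = 1) →
      Integrable (fun x => ∑ y, p x y * (1 - f x y)) μ →
      Integrable (fun x => ∑ y, p x y * (1 - g x y)) μ →
      (noisyR f - noisyR g = (1 - η * k / ((k : ℝ) - 1)) * (cleanR f - cleanR g)) ∧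
      ((∀ h : X → Fin k → ℝ, (∀ x i, 0 ≤ h x i) → (∀ x, ∑ i, h x i = 1) →
          Integrable (fun x => ∑ y, p x y * (1 - h x y)) μ →
          noisyR f ≤ noisyR h) →
        ∀ h : X → Fin k → ℝ, (∀ x i, 0 ≤ h x i) → (∀ x, ∑ i, h x i = 1) →
          Integrable (fun x => ∑ y, p x y * (1 - h x y)) μ →
          cleanR f ≤ cleanR h) := by
  intro ptilde cleanR noisyR f g hf0 hfsum hg0 hgsum hIf hIg
  have hk2 : (2 : ℝ) ≤ (k : ℝ) := by exact_mod_cast hk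
  have hk1pos : (0 : ℝ) < (k : ℝ) - 1 := by linarith
  have hkpos : (0 : ℝ) < (k : ℝ) := by linarith
  set c : ℝ := 1 - η * (k : ℝ) / ((k : ℝ) - 1) with hc
  have hcpos : 0 < c := by
    have h1 : η * (k : ℝ) < (k : ℝ) - 1 := by
      have := mul_lt_mul_of_pos_right hη hkpos
      rwa [div_mul_cancel₀ _ (ne_of_gt hkpos)] at this
    have h2 : η * (k : ℝ) / ((k : ℝ) - 1) < 1 := by
      rw [div_lt_one hk1pos]; exact h1
    simp only [hc]; linarith
  have key : ∀ h : X → Fin k → ℝ, (∀ x, ∑ i, h x i = 1) →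
      Integrable (fun x => ∑ y, p x y * (1 - h x y)) μ →
      noisyR h = c * cleanR h + η := by
    intro h hhsum hIh
    exact mae_noisy_eq μ k hk η p h hpsum hhsum hIh
  have hf := key f hfsum hIf
  have hg := key g hgsum hIg
  constructor
  · rw [hf, hg]; ring
  · intro hmin h hh0 hhsum hIh
    have := hmin h hh0 hhsum hIh
    rw [hf, key h hhsum hIh] at this
    have : c * cleanR f ≤ c * cleanR h := by linarith
    exact le_of_mul_le_mul_left this hcpos
end

section
/- Let p̃ be a noisy posterior with unique maximizer ỹ* and 0 < q < 1. The GCE-optimal noisy prediction satisfies f̃*_{ỹ*} = p̃(ỹ*)^{1/(1−q)} / ∑_i p̃(i)^{1/(1−q)} < 1 whenever p̃(ỹ*) < 1, and f̃*_{ỹ*} is a strictly increasing function of p̃(ỹ*) when the remaining mass is distributed uniformly among the other k−1 classes. -/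
open Finset

lemma gce_aux_frac (A B A' B' : ℝ) (hA : 0 < A) (hB : 0 < B) (hA' : 0 < A')
    (hB' : 0 < B') (h : A * B' < A' * B) : A / (A + B) < A' / (A' + B') := by
  rw [div_lt_div_iff₀ (by positivity) (by positivity)]
  nlinarith

/-- For 0 < q < 1 (so s = 1/(1−q) > 1), the GCE-optimal noisy prediction on
the mode is strictly less than 1 whenever the noisy posterior mode is less
than 1; and when the off-mode mass is uniform, the optimal mode prediction
a^s / (a^s + (k−1)((1−a)/(k−1))^s) is strictly increasing in a on (1/k, 1). -/
theorem gce_noisy_mode_prediction (k : ℕ) (hk : 2 ≤ k)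
    (q : ℝ) (hq0 : 0 < q) (hq1 : q < 1) :
    let s : ℝ := 1 / (1 - q)
    (∀ ptilde : Fin k → ℝ, (∀ i, 0 ≤ ptilde i) → (∑ i, ptilde i = 1) →
      ∀ ystar : Fin k, (∀ y, y ≠ ystar → ptilde y < ptilde ystar) →
        ptilde ystar < 1 →
        ptilde ystar ^ s / ∑ i, ptilde i ^ s < 1) ∧
    StrictMonoOn
      (fun a : ℝ =>
        a ^ s / (a ^ s + ((k : ℝ) - 1) * ((1 - a) / ((k : ℝ) - 1)) ^ s))
      (Set.Ioo (1 / (k : ℝ)) 1) := by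
  intro s
  have hs : 0 < s := by
    have : 0 < 1 - q := by linarith
    positivity
  constructor
  · intro p hp hsum ystar hmax hlt
    -- find y ≠ ystar with p y > 0
    have hex : ∃ y, y ≠ ystar ∧ 0 < p y := by
      by_contra hcon
      push_neg at hcon
      have hzero : ∀ y ∈ Finset.univ, y ≠ ystar → p y = 0 := by
        intro y _ hy
        exact le_antisymm (hcon y hy) (hp y)
      have : ∑ i, p i = p ystar := by
        rw [Finset.sum_eq_single ystar hzero (by simp)]
      rw [hsum] at this
      linarith
    obtain ⟨y, hy, hpy⟩ := hex
    have hpos : p ystar ^ s < ∑ i, p i ^ s := by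
      refine Finset.single_lt_sum (f := fun i => p i ^ s) hy (Finset.mem_univ _)
        (Finset.mem_univ _) (Real.rpow_pos_of_pos hpy s) ?_
      intro j _ _
      exact Real.rpow_nonneg (hp j) s
    have hden : 0 < ∑ i, p i ^ s :=
      lt_of_le_of_lt (Real.rpow_nonneg (hp ystar) s) hpos
    exact (div_lt_one hden).mpr hpos
  · intro a ha b hb hab
    simp only
    have hk1 : (0:ℝ) < (k:ℝ) - 1 := by
      have : (2:ℝ) ≤ (k:ℝ) := by exact_mod_cast hk
      linarith
    have hka : (0:ℝ) < 1 / (k:ℝ) := by positivity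
    have ha0 : 0 < a := lt_trans hka ha.1
    have hb0 : 0 < b := lt_trans hka hb.1
    have ha1 : a < 1 := ha.2
    have hb1 : b < 1 := hb.2
    set K : ℝ := (k:ℝ) - 1 with hK
    have hAa : 0 < a ^ s := Real.rpow_pos_of_pos ha0 s
    have hAb : 0 < b ^ s := Real.rpow_pos_of_pos hb0 s
    have hBa : 0 < K * ((1 - a) / K) ^ s := by
      have : 0 < (1 - a) / K := div_pos (by linarith) hk1
      exact mul_pos hk1 (Real.rpow_pos_of_pos this s)
    have hBb : 0 < K * ((1 - b) / K) ^ s := by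
      have : 0 < (1 - b) / K := div_pos (by linarith) hk1
      exact mul_pos hk1 (Real.rpow_pos_of_pos this s)
    apply gce_aux_frac _ _ _ _ hAa hBa hAb hBb
    -- goal: a^s * (K * ((1-b)/K)^s) < b^s * (K * ((1-a)/K)^s)
    have hda : ((1 - a) / K) ^ s = (1 - a) ^ s / K ^ s :=
      Real.div_rpow (by linarith) (le_of_lt hk1) s
    have hdb : ((1 - b) / K) ^ s = (1 - b) ^ s / K ^ s :=
      Real.div_rpow (by linarith) (le_of_lt hk1) s
    rw [hda, hdb]
    have hKs : 0 < K / K ^ s := by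
      have := Real.rpow_pos_of_pos hk1 s
      positivity
    have hkey : a ^ s * (1 - b) ^ s < b ^ s * (1 - a) ^ s := by
      rw [← Real.mul_rpow (le_of_lt ha0) (by linarith),
          ← Real.mul_rpow (le_of_lt hb0) (by linarith)]
      apply Real.rpow_lt_rpow (by nlinarith) (by nlinarith) hs
    calc a ^ s * (K * ((1 - b) ^ s / K ^ s))
        = (a ^ s * (1 - b) ^ s) * (K / K ^ s) := by ring
      _ < (b ^ s * (1 - a) ^ s) * (K / K ^ s) :=
          mul_lt_mul_of_pos_right hkey hKs
      _ = b ^ s * (K * ((1 - a) ^ s / K ^ s)) := by ring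
end
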